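/- arXiv:2407.18313 — 2 statements merged into one kernel-verified Lean document; each statement's English description precedes it below -/
import Mathlib

section
/- (Smacof minorization lemma.) Let X and Y be configurations such that d_ij(Y) > 0 for every pair i < j with w_ij·δ_ij > 0. Then Σ_{i<j} w_ij δ_ij d_ij(X) ≥ Σ_{i<j, d_ij(Y)>0} w_ij δ_ij ⟨X i − X j, Y i − Y j⟩ / d_ij(Y), with equality when X = Y. -/
open scoped BigOperators

/-- Distance between points `i` and `j` of a configuration. -/
noncomputable def confDist {n p : ℕ} (X : Fin n → EuclideanSpace ℝ (Fin p))
    (i j : Fin n) : ℝ := ‖X i - X j‖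

/-- Sum of `f i j` over all pairs `i < j`. -/
noncomputable def pairSum (n : ℕ) (f : Fin n → Fin n → ℝ) : ℝ :=
  ∑ i : Fin n, ∑ j : Fin n, if i < j then f i j else 0

/-!
Pair by pair this is Cauchy–Schwarz, `⟪u, v⟫ ≤ ‖u‖ ‖v‖`, with equality at `u = v`; multiplying
by the nonnegative weights `w i j * δ i j` and summing over `i < j` gives the minorization.
-/

theorem pairSum_le_pairSum {n : ℕ} {f g : Fin n → Fin n → ℝ}
    (h : ∀ i j, i < j → f i j ≤ g i j) : pairSum n f ≤ pairSum n g :=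
  Finset.sum_le_sum fun i _ => Finset.sum_le_sum fun j _ => by
    split_ifs with hij
    exacts [h i j hij, le_rfl]

theorem pairSum_congr {n : ℕ} {f g : Fin n → Fin n → ℝ}
    (h : ∀ i j, i < j → f i j = g i j) : pairSum n f = pairSum n g :=
  Finset.sum_congr rfl fun i _ => Finset.sum_congr rfl fun j _ => by
    split_ifs with hij
    exacts [h i j hij, rfl]

-- The guard `0 < d` is harmless for `d ≥ 0`, since `x / 0 = 0`.
theorem ite_pos_div_eq_div (x : ℝ) {d : ℝ} (hd : 0 ≤ d) :
    (if 0 < d then x / d else 0) = x / d := by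
  split_ifs with h
  · rfl
  · rw [le_antisymm (not_lt.1 h) hd, div_zero]

section InnerProductSpace

variable {E : Type*} [NormedAddCommGroup E] [InnerProductSpace ℝ E]

open scoped RealInnerProductSpace

theorem real_inner_div_norm_le_norm (u v : E) : ⟪u, v⟫ / ‖v‖ ≤ ‖u‖ :=
  div_le_of_le_mul₀ (norm_nonneg v) (norm_nonneg u) (real_inner_le_norm u v)

theorem real_inner_self_div_norm (v : E) : ⟪v, v⟫ / ‖v‖ = ‖v‖ := by
  rw [real_inner_self_eq_norm_mul_norm, mul_self_div_self]

theorem ite_mul_inner_div_norm_le {a : ℝ} (ha : 0 ≤ a) (u v : E) :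
    (if 0 < ‖v‖ then a * ⟪u, v⟫ / ‖v‖ else 0) ≤ a * ‖u‖ := by
  rw [ite_pos_div_eq_div _ (norm_nonneg v), mul_div_assoc]
  exact mul_le_mul_of_nonneg_left (real_inner_div_norm_le_norm u v) ha

theorem ite_mul_inner_self_div_norm (a : ℝ) (v : E) :
    (if 0 < ‖v‖ then a * ⟪v, v⟫ / ‖v‖ else 0) = a * ‖v‖ := by
  rw [ite_pos_div_eq_div _ (norm_nonneg v), mul_div_assoc, real_inner_self_div_norm]

end InnerProductSpace

theorem smacof_minorization_general
    {n p : ℕ}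
    (w δ : Fin n → Fin n → ℝ)
    (hw : ∀ i j : Fin n, i < j → 0 ≤ w i j)
    (hδ : ∀ i j : Fin n, i < j → 0 ≤ δ i j)
    (X Y : Fin n → EuclideanSpace ℝ (Fin p)) :
    pairSum n (fun i j => w i j * δ i j * confDist X i j) ≥
      pairSum n (fun i j =>
        if 0 < confDist Y i j then
          w i j * δ i j * (inner ℝ (X i - X j) (Y i - Y j) : ℝ) / confDist Y i j
        else 0) ∧
    (X = Y →
      pairSum n (fun i j => w i j * δ i j * confDist X i j) =
        pairSum n (fun i j =>
          if 0 < confDist Y i j then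
            w i j * δ i j * (inner ℝ (X i - X j) (Y i - Y j) : ℝ) / confDist Y i j
          else 0)) := by
  refine ⟨pairSum_le_pairSum fun i j hij => ?_, ?_⟩
  · exact ite_mul_inner_div_norm_le (mul_nonneg (hw i j hij) (hδ i j hij)) _ _
  · rintro rfl
    exact pairSum_congr fun i j _ => (ite_mul_inner_self_div_norm _ _).symm

/-- Smacof minorization lemma: the weighted sum of distances of `X` is minorized by
the Cauchy–Schwarz linearization at `Y`, with equality when `X = Y`. -/
theorem smacof_minorization
    {n p : ℕ} (hn : 2 ≤ n) (hp : 1 ≤ p)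
    (w δ : Fin n → Fin n → ℝ)
    (hw : ∀ i j : Fin n, i < j → 0 ≤ w i j)
    (hw1 : pairSum n w = 1)
    (hδ : ∀ i j : Fin n, i < j → 0 ≤ δ i j)
    (X Y : Fin n → EuclideanSpace ℝ (Fin p))
    (hY : ∀ i j : Fin n, i < j → 0 < w i j * δ i j → 0 < confDist Y i j) :
    pairSum n (fun i j => w i j * δ i j * confDist X i j) ≥
      pairSum n (fun i j =>
        if 0 < confDist Y i j then
          w i j * δ i j * (inner ℝ (X i - X j) (Y i - Y j) : ℝ) / confDist Y i j
        else 0) ∧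
    (X = Y →
      pairSum n (fun i j => w i j * δ i j * confDist X i j) =
        pairSum n (fun i j =>
          if 0 < confDist Y i j then
            w i j * δ i j * (inner ℝ (X i - X j) (Y i - Y j) : ℝ) / confDist Y i j
          else 0)) :=
  smacof_minorization_general w δ hw hδ X Y
end

section
/- (Gradient of raw stress.) Let X be an n×p real matrix with d_ij(X) > 0 for every pair i < j with w_ij > 0. Then the raw stress function σ_R is Fréchet differentiable at X with derivative the linear map H ↦ 2·trace(Hᵀ (V − B(X)) X). -/
open scoped BigOperators
open Matrix

/-- Euclidean distance between rows `i` and `j` of an `n × p` matrix. -/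
noncomputable def rowDist {n p : ℕ} (X : Matrix (Fin n) (Fin p) ℝ) (i j : Fin n) : ℝ :=
  Real.sqrt (∑ k : Fin p, (X i k - X j k) ^ 2)

/-- The matrix `A_ij = (e_i - e_j)(e_i - e_j)ᵀ`. -/
noncomputable def Amat {n : ℕ} (i j : Fin n) : Matrix (Fin n) (Fin n) ℝ :=
  Matrix.vecMulVec (Pi.single i 1 - Pi.single j 1) (Pi.single i 1 - Pi.single j 1)

/-- The matrix `V = Σ_{i<j} w_ij A_ij`. -/
noncomputable def Vmat {n : ℕ} (w : Fin n → Fin n → ℝ) : Matrix (Fin n) (Fin n) ℝ :=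
  ∑ i : Fin n, ∑ j : Fin n, if i < j then w i j • Amat i j else 0

/-- Mean distance `d̄(X) = Σ_{i<j} w_ij d_ij(X)`. -/
noncomputable def dbarM {n p : ℕ} (w : Fin n → Fin n → ℝ)
    (X : Matrix (Fin n) (Fin p) ℝ) : ℝ :=
  ∑ i : Fin n, ∑ j : Fin n, if i < j then w i j * rowDist X i j else 0

/-- The matrix `M(X) = d̄(X) · Σ_{i<j, d_ij(X)>0} (w_ij/d_ij(X)) A_ij`. -/
noncomputable def Mmat {n p : ℕ} (w : Fin n → Fin n → ℝ)
    (X : Matrix (Fin n) (Fin p) ℝ) : Matrix (Fin n) (Fin n) ℝ :=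
  dbarM w X •
    ∑ i : Fin n, ∑ j : Fin n,
      if i < j ∧ 0 < rowDist X i j then (w i j / rowDist X i j) • Amat i j else 0

/-- The matrix `B(X) = Σ_{i<j, d_ij(X)>0} w_ij (δ_ij/d_ij(X)) A_ij`. -/
noncomputable def Bmat {n p : ℕ} (w δ : Fin n → Fin n → ℝ)
    (X : Matrix (Fin n) (Fin p) ℝ) : Matrix (Fin n) (Fin n) ℝ :=
  ∑ i : Fin n, ∑ j : Fin n,
    if i < j ∧ 0 < rowDist X i j then (w i j * (δ i j / rowDist X i j)) • Amat i j else 0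

/-- Raw stress as a function of the configuration matrix. -/
noncomputable def sigmaRM {n p : ℕ} (w δ : Fin n → Fin n → ℝ)
    (X : Matrix (Fin n) (Fin p) ℝ) : ℝ :=
  ∑ i : Fin n, ∑ j : Fin n, if i < j then w i j * (δ i j - rowDist X i j) ^ 2 else 0

attribute [local instance] Matrix.frobeniusNormedAddCommGroup Matrix.frobeniusNormedSpace

/-!
With `v = e_i - e_j` we have `d_ij(Y) = ‖vᵀ Y‖` and
`⟪vᵀ X, vᵀ H⟫ = tr(Hᵀ (v vᵀ) X) = tr(Hᵀ A_ij X)`, so where `d_ij(X) > 0` the chain rule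
differentiates `w_ij (δ_ij - d_ij)²` to `H ↦ 2 w_ij (1 - δ_ij / d_ij(X)) tr(Hᵀ A_ij X)`.
Pairs with `w_ij = 0` (the only ones allowed to have `d_ij(X) = 0`) contribute nothing, and
summing over pairs, linearity of `C ↦ tr(Hᵀ C X)` collects the coefficients into `2 (V - B(X))`.
-/

theorem HasFDerivAt.norm {F G : Type*} [NormedAddCommGroup F] [InnerProductSpace ℝ F]
    [NormedAddCommGroup G] [NormedSpace ℝ G] {f : G → F} {f' : G →L[ℝ] F} {x : G}
    (hf : HasFDerivAt f f' x) (h0 : f x ≠ 0) :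
    HasFDerivAt (fun y => ‖f y‖) (‖f x‖⁻¹ • (innerSL ℝ (f x)).comp f') x := by
  have h := (Real.hasDerivAt_sqrt (by positivity)).comp_hasFDerivAt x hf.norm_sq
  simp only [Function.comp_def, Real.sqrt_sq (norm_nonneg _)] at h
  refine h.congr_fderiv (ContinuousLinearMap.ext fun y => ?_)
  simp
  field_simp

section TraceForm

variable {m k : Type*} [Fintype m] [Fintype k]

noncomputable def traceForm (X : Matrix m k ℝ) :
    Matrix m m ℝ →ₗ[ℝ] Matrix m k ℝ →L[ℝ] ℝ where
  toFun C := LinearMap.toContinuousLinearMap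
    { toFun := fun H => trace (Hᵀ * C * X)
      map_add' := fun H K => by simp [Matrix.add_mul, trace_add]
      map_smul' := fun c H => by simp [trace_smul] }
  map_add' C D := ContinuousLinearMap.ext fun H => by
    simp [Matrix.mul_add, Matrix.add_mul, trace_add]
  map_smul' c C := ContinuousLinearMap.ext fun H => by simp [trace_smul]

@[simp]
theorem traceForm_apply (X : Matrix m k ℝ) (C : Matrix m m ℝ) (H : Matrix m k ℝ) :
    traceForm X C H = trace (Hᵀ * C * X) :=
  rfl

noncomputable def vecMulCLM (v : m → ℝ) : Matrix m k ℝ →L[ℝ] EuclideanSpace ℝ k :=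
  LinearMap.toContinuousLinearMap
    { toFun := fun Y => WithLp.toLp 2 (v ᵥ* Y)
      map_add' := fun Y Z => by simp [Matrix.vecMul_add]
      map_smul' := fun c Y => by simp [Matrix.vecMul_smul] }

@[simp]
theorem vecMulCLM_apply (v : m → ℝ) (Y : Matrix m k ℝ) :
    vecMulCLM v Y = WithLp.toLp 2 (v ᵥ* Y) :=
  rfl

theorem inner_vecMulCLM_eq_traceForm (v : m → ℝ) (X H : Matrix m k ℝ) :
    inner ℝ (vecMulCLM v X) (vecMulCLM v H) = traceForm X (vecMulVec v v) H := by
  rw [traceForm_apply, mul_vecMulVec, vecMulVec_mul, trace_vecMulVec, mulVec_transpose,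
    EuclideanSpace.inner_eq_star_dotProduct]
  simp [dotProduct_comm]

end TraceForm

section RawStress

variable {n p : ℕ}

theorem rowDist_eq_norm_vecMulCLM (X : Matrix (Fin n) (Fin p) ℝ) (i j : Fin n) :
    rowDist X i j = ‖vecMulCLM (Pi.single i 1 - Pi.single j 1) X‖ := by
  simp [rowDist, EuclideanSpace.norm_eq, sub_vecMul]

theorem hasFDerivAt_rowDist {X : Matrix (Fin n) (Fin p) ℝ} {i j : Fin n}
    (hd : 0 < rowDist X i j) :
    HasFDerivAt (rowDist · i j) ((rowDist X i j)⁻¹ • traceForm X (Amat i j)) X := by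
  simp only [rowDist_eq_norm_vecMulCLM] at hd ⊢
  refine ((vecMulCLM _).hasFDerivAt.norm (norm_pos_iff.mp hd)).congr_fderiv ?_
  congr 1
  exact ContinuousLinearMap.ext fun H => inner_vecMulCLM_eq_traceForm _ X H

theorem hasFDerivAt_sq_sub_rowDist {X : Matrix (Fin n) (Fin p) ℝ} {i j : Fin n}
    (hd : 0 < rowDist X i j) (δ : ℝ) :
    HasFDerivAt (fun Y => (δ - rowDist Y i j) ^ 2)
      (traceForm X ((2 * (1 - δ / rowDist X i j)) • Amat i j)) X := by
  have hsq : HasDerivAt (fun t : ℝ => (δ - t) ^ 2) (-(2 * (δ - rowDist X i j)))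
      (rowDist X i j) :=
    (((hasDerivAt_id _).const_sub δ).fun_pow 2).congr_deriv (by simp)
  have hcoef : (2 * (1 - δ / rowDist X i j)) • Amat i j
      = -(2 * (δ - rowDist X i j)) • (rowDist X i j)⁻¹ • Amat i j := by
    rw [smul_smul]
    congr 1
    field_simp
    ring
  refine (hsq.comp_hasFDerivAt X (hasFDerivAt_rowDist hd)).congr_fderiv ?_
  rw [hcoef, map_smul, map_smul]
  -- the two sides differ only in the instances on matrices (Frobenius vs. product), which are defeq
  rfl

theorem hasFDerivAt_mul_sq_sub_rowDist {X : Matrix (Fin n) (Fin p) ℝ} {i j : Fin n} {w : ℝ}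
    (hd : w ≠ 0 → 0 < rowDist X i j) (δ : ℝ) :
    HasFDerivAt (fun Y => w * (δ - rowDist Y i j) ^ 2)
      (traceForm X ((2 : ℝ) • (w • Amat i j -
        if 0 < rowDist X i j then (w * (δ / rowDist X i j)) • Amat i j else 0))) X := by
  rcases eq_or_ne w 0 with rfl | hw
  · simpa using hasFDerivAt_const (0 : ℝ) X
  have hcoef : (2 : ℝ) • (w • Amat i j - (w * (δ / rowDist X i j)) • Amat i j)
      = w • (2 * (1 - δ / rowDist X i j)) • Amat i j := by
    rw [← sub_smul, smul_smul, smul_smul]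
    congr 1
    ring
  refine ((hasFDerivAt_sq_sub_rowDist (hd hw) δ).const_mul w).congr_fderiv ?_
  rw [if_pos (hd hw), hcoef, map_smul (traceForm X) w]
  rfl

theorem hasFDerivAt_sigmaRM {w δ : Fin n → Fin n → ℝ} {X : Matrix (Fin n) (Fin p) ℝ}
    (hw : ∀ i j, i < j → 0 ≤ w i j) (hd : ∀ i j, i < j → 0 < w i j → 0 < rowDist X i j) :
    HasFDerivAt (sigmaRM w δ) (traceForm X ((2 : ℝ) • (Vmat w - Bmat w δ X))) X := by
  have hterm : ∀ i j, HasFDerivAt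
      (fun Y => if i < j then w i j * (δ i j - rowDist Y i j) ^ 2 else 0)
      (traceForm X ((2 : ℝ) • ((if i < j then w i j • Amat i j else 0) -
        if i < j ∧ 0 < rowDist X i j then (w i j * (δ i j / rowDist X i j)) • Amat i j
        else 0))) X := by
    intro i j
    by_cases hij : i < j
    · simpa only [hij, if_true, true_and] using
        hasFDerivAt_mul_sq_sub_rowDist (fun h => hd i j hij ((hw i j hij).lt_of_ne' h)) (δ i j)
    · simpa [hij] using hasFDerivAt_const (0 : ℝ) X
  refine HasFDerivAt.congr_fderiv
    (HasFDerivAt.fun_sum fun i _ => HasFDerivAt.fun_sum fun j _ => hterm i j) ?_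
  simp only [Vmat, Bmat, ← Finset.sum_sub_distrib, Finset.smul_sum, map_sum]
  rfl

end RawStress

theorem hasFDerivAt_sigmaR_general
    {n p : ℕ}
    (w δ : Fin n → Fin n → ℝ)
    (hw : ∀ i j : Fin n, i < j → 0 ≤ w i j)
    (X : Matrix (Fin n) (Fin p) ℝ)
    (hd : ∀ i j : Fin n, i < j → 0 < w i j → 0 < rowDist X i j) :
    ∃ L : Matrix (Fin n) (Fin p) ℝ →L[ℝ] ℝ,
      (∀ H : Matrix (Fin n) (Fin p) ℝ,
        L H = 2 * Matrix.trace (Hᵀ * (Vmat w - Bmat w δ X) * X)) ∧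
      HasFDerivAt (sigmaRM w δ) L X :=
  ⟨traceForm X ((2 : ℝ) • (Vmat w - Bmat w δ X)),
    fun H => by simp [Matrix.mul_sub, Matrix.sub_mul], hasFDerivAt_sigmaRM hw hd⟩

/-- Gradient of raw stress: `σ_R` is Fréchet differentiable at `X` with derivative
`H ↦ 2·trace(Hᵀ (V − B(X)) X)`. -/
theorem hasFDerivAt_sigmaR
    {n p : ℕ} (hn : 2 ≤ n) (hp : 1 ≤ p)
    (w δ : Fin n → Fin n → ℝ)
    (hw : ∀ i j : Fin n, i < j → 0 ≤ w i j)
    (hw1 : (∑ i : Fin n, ∑ j : Fin n, if i < j then w i j else 0) = 1)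
    (hδ : ∀ i j : Fin n, i < j → 0 ≤ δ i j)
    (X : Matrix (Fin n) (Fin p) ℝ)
    (hd : ∀ i j : Fin n, i < j → 0 < w i j → 0 < rowDist X i j) :
    ∃ L : Matrix (Fin n) (Fin p) ℝ →L[ℝ] ℝ,
      (∀ H : Matrix (Fin n) (Fin p) ℝ,
        L H = 2 * Matrix.trace (Hᵀ * (Vmat w - Bmat w δ X) * X)) ∧
      HasFDerivAt (sigmaRM w δ) L X :=
  hasFDerivAt_sigmaR_general w δ hw X hd
end
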